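/- Let z ≥ 1, κ : Fin z → ℝ, and ν₄, ν₅ > 0. Define the power-mean minimum by amin_pm(κ) := ((1/z) · Σ_i (κ i)^{ν₄})^{1/ν₄} if min_i κ i > 0, and amin_pm(κ) := −((1/z) · Σ_i (−min(κ i, 0))^{ν₅})^{1/ν₅} otherwise. Then amin_pm(κ) ≥ 0 if and only if min_i κ i ≥ 0. -/
import Mathlib


open Classical in
/-- The power-mean minimum operator: the `ν₄`-power mean of the entries when
all entries are positive, and minus the `ν₅`-power mean of the magnitudes of
the negative parts otherwise. -/
noncomputable def aminPm (z : ℕ) (hz : 0 < z) (κ : Fin z → ℝ) (ν₄ ν₅ : ℝ) : ℝ :=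
  if 0 < Finset.univ.inf' ⟨(⟨0, hz⟩ : Fin z), Finset.mem_univ _⟩ κ then
    ((1 / z : ℝ) * ∑ i, (κ i) ^ ν₄) ^ (1 / ν₄)
  else -(((1 / z : ℝ) * ∑ i, (-min (κ i) 0) ^ ν₅) ^ (1 / ν₅))

/-- The power-mean minimum is nonnegative iff the true minimum
is nonnegative (soundness and reverse soundness). -/
theorem aminPm_nonneg_iff (z : ℕ) (hz : 0 < z) (κ : Fin z → ℝ)
    (ν₄ ν₅ : ℝ) (hν₄ : 0 < ν₄) (hν₅ : 0 < ν₅) :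
    0 ≤ aminPm z hz κ ν₄ ν₅ ↔
      0 ≤ Finset.univ.inf' ⟨(⟨0, hz⟩ : Fin z), Finset.mem_univ _⟩ κ := by
  unfold aminPm
  set m := Finset.univ.inf' ⟨(⟨0, hz⟩ : Fin z), Finset.mem_univ _⟩ κ with hm
  by_cases h : 0 < m
  · simp only [h, if_pos]
    constructor
    · intro _; exact h.le
    · intro _
      apply Real.rpow_nonneg
      apply mul_nonneg (by positivity)
      apply Finset.sum_nonneg
      intro i _
      have hκi : 0 < κ i := lt_of_lt_of_le h (Finset.inf'_le _ (Finset.mem_univ i))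
      exact Real.rpow_nonneg hκi.le _
  · simp only [h, if_neg, not_false_iff]
    push_neg at h
    rcases lt_or_eq_of_le h with hlt | heq
    · -- min < 0: there is i with κ i < 0
      obtain ⟨i, _, hi⟩ := Finset.exists_mem_eq_inf' (⟨(⟨0, hz⟩ : Fin z), Finset.mem_univ _⟩) κ
      have hκi : κ i < 0 := by rw [hm, hi] at hlt; exact hlt
      constructor
      · intro hc
        exfalso
        have hsum : 0 < ∑ j, (-min (κ j) 0) ^ ν₅ := by
          apply Finset.sum_pos'
          · intro j _
            apply Real.rpow_nonneg
            simp [min_le_iff]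
          · refine ⟨i, Finset.mem_univ i, ?_⟩
            apply Real.rpow_pos_of_pos
            simp [min_eq_left hκi.le]
            linarith
        have hpos : 0 < ((1 / z : ℝ) * ∑ j, (-min (κ j) 0) ^ ν₅) ^ (1 / ν₅) := by
          apply Real.rpow_pos_of_pos
          apply mul_pos _ hsum
          positivity
        linarith
      · intro hc; linarith
    · -- min = 0
      have hall : ∀ i, 0 ≤ κ i := by
        intro i
        rw [← heq]
        exact Finset.inf'_le _ (Finset.mem_univ i)
      have hzero : ∀ i, (-min (κ i) 0) ^ ν₅ = 0 := by
        intro i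
        rw [min_eq_right (hall i)]
        simp [Real.zero_rpow hν₅.ne']
      simp only [hzero, Finset.sum_const, smul_zero, mul_zero,
        Real.zero_rpow (by positivity : (1/ν₅ : ℝ) ≠ 0), neg_zero]
      constructor <;> intro _
      · exact heq.ge
      · rfl
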